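/- Any occurrence of the word w_n l_{n+1} in ξ is immediately followed by w_n l_n and immediately preceded by w_n l_n. -/

import Mathlib

inductive A : Type
  | a | b | c | d
deriving DecidableEq

def subst : A → List A
  | A.a => [A.a, A.c, A.a]
  | A.b => [A.d]
  | A.c => [A.b]
  | A.d => [A.c]

def substW (u : List A) : List A := u.flatMap subst

def wrd (n : ℕ) : List A := substW^[n - 1] [A.a]

def ltr (n : ℕ) : List A := substW^[n - 1] [A.c]

def seg (ξ : ℕ → A) (s m : ℕ) : List A := (List.range m).map fun i => ξ (s + 1 + i)

def IsFixed (ξ : ℕ → A) : Prop :=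
  ∀ N : ℕ, seg ξ 0 ((substW (seg ξ 0 N)).length) = substW (seg ξ 0 N)

/-!
The letter of `ξ` at position `q = 2 ^ j * u`, `u` odd, is `a` if `j = 0` and `l_j` otherwise,
and `l_j` only depends on `j mod 3`: this follows from `w_{n+1} = w_n l_n w_n`. So `ξ` is the
ruler sequence `ν₂` coloured by `letter`, and occurrences become statements about valuations.
An occurrence of `w_n` after position `s` forces `2 ^ (n - 1) ∣ s`: inductively, if `s = 2 ^ j * u`
with `u` odd and `j < n - 1`, matching the letters at offsets `2 ^ j` and `3 * 2 ^ j` would make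
`ν₂ (u + 1)` and `ν₂ (u + 3)` positive multiples of 3, so `8` would divide both. The next letter
`l_{n+1}` then makes `s / 2 ^ n` odd, so the two neighbouring blocks start at even multiples of
`2 ^ n` and end with `l_n`.
-/

def letter (j : ℕ) : A :=
  if j = 0 then A.a else if j % 3 = 1 then A.c else if j % 3 = 2 then A.b else A.d

def rulerWord (q : ℕ) : A := letter (padicValNat 2 q)

lemma letter_mod_three_eq {i j : ℕ} (h : letter i = letter j) : i % 3 = j % 3 := by
  unfold letter at h
  split_ifs at h <;> omega

lemma padicValNat_two_pow_mul (n : ℕ) {t : ℕ} (ht : t ≠ 0) :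
    padicValNat 2 (2 ^ n * t) = n + padicValNat 2 t := by
  rw [padicValNat.mul (by positivity) ht, padicValNat.prime_pow]

lemma padicValNat_two_of_odd {t : ℕ} (ht : Odd t) : padicValNat 2 t = 0 :=
  padicValNat.eq_zero_of_not_dvd ht.not_two_dvd_nat

lemma padicValNat_two_pow_mul_add {n q : ℕ} (t : ℕ) (hq0 : 0 < q) (hq : q < 2 ^ n) :
    padicValNat 2 (2 ^ n * t + q) = padicValNat 2 q := by
  obtain ⟨j, r, hr, rfl⟩ := Nat.exists_eq_two_pow_mul_odd hq0.ne'
  obtain ⟨d, rfl⟩ : ∃ d, n = j + 1 + d := by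
    have := (Nat.pow_lt_pow_iff_right one_lt_two).mp ((Nat.le_mul_of_pos_right _ hr.pos).trans_lt hq)
    exact ⟨n - j - 1, by omega⟩
  have hsplit : 2 ^ (j + 1 + d) * t + 2 ^ j * r = 2 ^ j * (2 * (2 ^ d * t) + r) := by ring
  have hodd : Odd (2 * (2 ^ d * t) + r) := (even_two_mul _).add_odd hr
  rw [hsplit, padicValNat_two_pow_mul _ hodd.pos.ne', padicValNat_two_pow_mul _ hr.pos.ne',
    padicValNat_two_of_odd hodd, padicValNat_two_of_odd hr]

lemma rulerWord_two_pow_mul (n : ℕ) {t : ℕ} (ht : t ≠ 0) :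
    rulerWord (2 ^ n * t) = letter (n + padicValNat 2 t) := by
  rw [rulerWord, padicValNat_two_pow_mul n ht]

lemma rulerWord_two_pow_mul_add {n q : ℕ} (t : ℕ) (hq0 : 0 < q) (hq : q < 2 ^ n) :
    rulerWord (2 ^ n * t + q) = rulerWord q := by
  rw [rulerWord, rulerWord, padicValNat_two_pow_mul_add t hq0 hq]

lemma two_pow_dvd_of_rulerWord_add_eq {s : ℕ} : ∀ n : ℕ,
    (∀ q, 0 < q → q < 2 ^ (n + 1) → rulerWord (s + q) = rulerWord q) → 2 ^ n ∣ s
  | 0, _ => one_dvd s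
  | n + 1, h => by
    obtain ⟨u, rfl⟩ := two_pow_dvd_of_rulerWord_add_eq n fun q hq0 hq =>
      h q hq0 (hq.trans (Nat.pow_lt_pow_right one_lt_two (by omega)))
    rcases Nat.even_or_odd u with ⟨v, rfl⟩ | hu
    · exact ⟨v, by ring⟩
    exfalso
    have h8 : ∀ i, Odd i → i < 4 → 8 ∣ u + i := by
      intro i hi hi4
      have hne : u + i ≠ 0 := by have := hi.pos; omega
      have hpos := one_le_padicValNat_of_dvd hne (hu.add_odd hi).two_dvd
      have hlt : 2 ^ n * i < 2 ^ (n + 1 + 1) := by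
        rw [pow_succ, pow_succ, mul_assoc]; exact Nat.mul_lt_mul_of_pos_left (by omega) (by positivity)
      have heq := h (2 ^ n * i) (Nat.mul_pos (by positivity) hi.pos) hlt
      rw [← mul_add, rulerWord_two_pow_mul n hne, rulerWord_two_pow_mul n hi.pos.ne',
        padicValNat_two_of_odd hi] at heq
      have := letter_mod_three_eq heq
      rw [show 8 = 2 ^ 3 by rfl, padicValNat_dvd_iff_le hne]
      omega
    have h1 := h8 1 odd_one (by norm_num)
    have h3 := h8 3 (by decide) (by norm_num)
    omega

lemma exists_odd_of_rulerWord_add_eq {n s : ℕ} (hn : 1 ≤ n)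
    (hper : ∀ q, 0 < q → q < 2 ^ n → rulerWord (s + q) = rulerWord q)
    (hlast : rulerWord (s + 2 ^ n) = letter (n + 1)) : ∃ k, Odd k ∧ s = 2 ^ n * k := by
  obtain ⟨m, rfl⟩ : ∃ m, n = m + 1 := ⟨n - 1, by omega⟩
  obtain ⟨k, rfl⟩ := two_pow_dvd_of_rulerWord_add_eq m hper
  rw [show 2 ^ m * k + 2 ^ (m + 1) = 2 ^ m * (k + 2) by ring,
    rulerWord_two_pow_mul m (by omega)] at hlast
  have hval := letter_mod_three_eq hlast
  obtain ⟨j, hj⟩ : 2 ^ 2 ∣ k + 2 := by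
    rw [padicValNat_dvd_iff_le (by omega)]; omega
  exact ⟨2 * j - 1, ⟨j - 1, by omega⟩, by rw [pow_succ, mul_assoc]; congr 1; omega⟩

lemma substW_iterate_append (m : ℕ) (u v : List A) :
    substW^[m] (u ++ v) = substW^[m] u ++ substW^[m] v := by
  induction m generalizing u v with
  | zero => rfl
  | succ m ih => simp only [Function.iterate_succ_apply, substW, List.flatMap_append, ih]

lemma subst_letter (j : ℕ) : subst (letter (j + 1)) = [letter (j + 2)] := by
  unfold letter
  split_ifs <;> first | rfl | omega | contradiction

lemma substW_iterate_c (j : ℕ) : substW^[j] [A.c] = [letter (j + 1)] := by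
  induction j with
  | zero => rfl
  | succ j ih => rw [Function.iterate_succ_apply', ih, substW, List.flatMap_singleton, subst_letter]

lemma ltr_eq_singleton {n : ℕ} (hn : 1 ≤ n) : ltr n = [letter n] := by
  obtain ⟨j, rfl⟩ : ∃ j, n = j + 1 := ⟨n - 1, by omega⟩
  exact substW_iterate_c j

lemma wrd_add_one {n : ℕ} (hn : 1 ≤ n) : wrd (n + 1) = wrd n ++ ltr n ++ wrd n := by
  obtain ⟨j, rfl⟩ : ∃ j, n = j + 1 := ⟨n - 1, by omega⟩
  have hsub : substW [A.a] = [A.a] ++ [A.c] ++ [A.a] := rfl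
  simp only [wrd, ltr, Nat.add_sub_cancel]
  rw [Function.iterate_succ_apply, hsub, substW_iterate_append, substW_iterate_append]

lemma map_rulerWord_range'_two_pow_mul_add (n t : ℕ) :
    (List.range' (2 ^ n * t + 1) (2 ^ n - 1)).map rulerWord =
      (List.range' 1 (2 ^ n - 1)).map rulerWord := by
  rw [← List.map_add_range', List.map_map, List.map_inj_left]
  intro q hq
  rw [List.mem_range'_1] at hq
  exact rulerWord_two_pow_mul_add t (by omega) (by omega)

lemma wrd_eq_map_rulerWord {n : ℕ} (hn : 1 ≤ n) :
    wrd n = (List.range' 1 (2 ^ n - 1)).map rulerWord := by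
  induction n, hn using Nat.le_induction with
  | base => simp [wrd, rulerWord, letter]
  | succ n hn ih =>
    have hsplit : List.range' 1 (2 ^ (n + 1) - 1) =
        List.range' 1 (2 ^ n - 1) ++ 2 ^ n :: List.range' (2 ^ n * 1 + 1) (2 ^ n - 1) := by
      have := Nat.one_le_two_pow (n := n)
      rw [show 2 ^ (n + 1) - 1 = 2 ^ n - 1 + (2 ^ n - 1 + 1) by rw [pow_succ]; omega,
        ← List.range'_append_1, List.range'_succ]
      congr 3 <;> omega
    rw [wrd_add_one hn, ltr_eq_singleton hn, ih, hsplit, List.map_append, List.map_cons,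
      map_rulerWord_range'_two_pow_mul_add, rulerWord, padicValNat.prime_pow, List.append_assoc,
      List.singleton_append]

lemma seg_eq_map_range' (ξ : ℕ → A) (s m : ℕ) : seg ξ s m = (List.range' (s + 1) m).map ξ := by
  rw [seg, List.range'_eq_map_range, List.map_map]
  rfl

lemma seg_zero_substW_iterate {ξ : ℕ → A} (hξ : IsFixed ξ) (m : ℕ) :
    seg ξ 0 (substW^[m] [A.a]).length = substW^[m] [A.a] := by
  induction m with
  | zero =>
    have h := hξ 1
    simp only [seg, List.range_one, List.map_singleton] at h ⊢
    cases h1 : ξ (0 + 1 + 0) <;> simp_all [substW, subst, List.range_succ]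
  | succ m ih =>
    rw [Function.iterate_succ_apply', ← ih, hξ, ih]

lemma apply_eq_rulerWord {ξ : ℕ → A} (hξ : IsFixed ξ) {q : ℕ} (hq : 0 < q) : ξ q = rulerWord q := by
  have hpre := seg_zero_substW_iterate hξ q
  rw [← show wrd (q + 1) = substW^[q] [A.a] from rfl, wrd_eq_map_rulerWord (by omega),
    List.length_map, List.length_range', seg_eq_map_range', List.map_inj_left] at hpre
  exact hpre q (List.mem_range'_1.mpr ⟨hq, by have := Nat.lt_two_pow_self (n := q + 1); omega⟩)

lemma seg_two_pow {ξ : ℕ → A} (hξ : IsFixed ξ) (n s : ℕ) :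
    seg ξ s (2 ^ n) = (List.range' (s + 1) (2 ^ n - 1)).map rulerWord ++ [rulerWord (s + 2 ^ n)] := by
  obtain ⟨a, ha⟩ : ∃ a, 2 ^ n = a + 1 := ⟨2 ^ n - 1, by have := Nat.one_le_two_pow (n := n); omega⟩
  rw [seg_eq_map_range', ha, Nat.add_sub_cancel, List.range'_concat, List.map_append,
    List.map_singleton, one_mul, ← add_assoc, add_right_comm]
  congr 1
  · refine List.map_inj_left.mpr fun q hq => apply_eq_rulerWord hξ ?_
    have := (List.mem_range'_1.mp hq).1
    omega
  · rw [apply_eq_rulerWord hξ (by omega)]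

lemma seg_two_pow_mul {ξ : ℕ → A} (hξ : IsFixed ξ) {n : ℕ} (hn : 1 ≤ n) (k : ℕ) :
    seg ξ (2 ^ n * k) (2 ^ n) = wrd n ++ ltr (n + padicValNat 2 (k + 1)) := by
  rw [seg_two_pow hξ, map_rulerWord_range'_two_pow_mul_add, ← wrd_eq_map_rulerWord hn,
    ← mul_add_one, rulerWord_two_pow_mul n k.add_one_ne_zero, ltr_eq_singleton (by omega)]

lemma exists_odd_of_seg_eq {ξ : ℕ → A} (hξ : IsFixed ξ) {n s : ℕ} (hn : 1 ≤ n)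
    (h : seg ξ s (2 ^ n) = wrd n ++ ltr (n + 1)) : ∃ k, Odd k ∧ s = 2 ^ n * k := by
  rw [seg_two_pow hξ, wrd_eq_map_rulerWord hn, ltr_eq_singleton (by omega)] at h
  obtain ⟨hper, hlast⟩ := List.append_inj' h rfl
  rw [← List.map_add_range', List.map_map, List.map_inj_left] at hper
  refine exists_odd_of_rulerWord_add_eq hn (fun q hq0 hq => hper q ?_) (List.singleton_inj.mp hlast)
  exact List.mem_range'_1.mpr ⟨hq0, by omega⟩

theorem stmt10 (ξ : ℕ → A) (hξ : IsFixed ξ) :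
    ∀ n : ℕ, 1 ≤ n → ∀ s : ℕ, seg ξ s (2 ^ n) = wrd n ++ ltr (n + 1) →
      seg ξ (s + 2 ^ n) (2 ^ n) = wrd n ++ ltr n ∧
      2 ^ n ≤ s ∧ seg ξ (s - 2 ^ n) (2 ^ n) = wrd n ++ ltr n := by
  intro n hn s hseg
  obtain ⟨k, hk, rfl⟩ := exists_odd_of_seg_eq hξ hn hseg
  have hnext : padicValNat 2 (k + 1 + 1) = 0 := padicValNat_two_of_odd (hk.add_even even_two)
  have hprev : padicValNat 2 (k - 1 + 1) = 0 := by
    rw [Nat.sub_add_cancel hk.pos]; exact padicValNat_two_of_odd hk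
  refine ⟨?_, Nat.le_mul_of_pos_right _ hk.pos, ?_⟩
  · rw [← mul_add_one, seg_two_pow_mul hξ hn, hnext, add_zero]
  · rw [← Nat.mul_sub_one, seg_two_pow_mul hξ hn, hprev, add_zero]
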